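/- Let F be a hermitian matrix on ℂ² ⊗ ℂⁿ and ψ a unit vector in ℂ² ⊗ ℂⁿ such that F − 2|ψ⟩⟨ψ| is positive semidefinite. Then the largest eigenvalue of F^Γ is at least 1; equivalently, there exists a unit vector v with ⟨v, F^Γ v⟩ ≥ 1. -/

import Mathlib

open Matrix
open scoped ComplexOrder

/-- The positive semidefinite square root of a positive semidefinite matrix, as defined in
Mathlib (December 2024) under the name `Matrix.PosSemidef.sqrt`. -/
noncomputable def posSemidefSqrt {ι : Type*} [Fintype ι] [DecidableEq ι]
    {A : Matrix ι ι ℂ} (hA : A.PosSemidef) : Matrix ι ι ℂ :=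
  hA.1.eigenvectorUnitary.1 * diagonal ((↑) ∘ (√·) ∘ hA.1.eigenvalues) *
  (star hA.1.eigenvectorUnitary : Matrix ι ι ℂ)

noncomputable def traceNorm {ι : Type*} [Fintype ι] [DecidableEq ι]
    (A : Matrix ι ι ℂ) : ℝ :=
  ((posSemidefSqrt (Matrix.posSemidef_conjTranspose_mul_self A)).trace).re

noncomputable def mfun {ι : Type*} [Fintype ι] [DecidableEq ι] (g : ℝ → ℝ)
    (A : Matrix ι ι ℂ) : Matrix ι ι ℂ :=
  if hA : A.IsHermitian then
    (hA.eigenvectorUnitary : Matrix ι ι ℂ) *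
      Matrix.diagonal (fun i => (g (hA.eigenvalues i) : ℂ)) *
      (star hA.eigenvectorUnitary : Matrix ι ι ℂ)
  else 0

noncomputable def divDiff {ι : Type*} (g : ℝ → ℝ) (a : ι → ℝ) : Matrix ι ι ℝ :=
  Matrix.of fun i j =>
    if a i = a j then deriv g (a i) else (g (a i) - g (a j)) / (a i - a j)

noncomputable def Dop {ι : Type*} [Fintype ι] [DecidableEq ι] (g : ℝ → ℝ)
    {A : Matrix ι ι ℂ} (hA : A.IsHermitian) (B : Matrix ι ι ℂ) : Matrix ι ι ℂ :=
  (hA.eigenvectorUnitary : Matrix ι ι ℂ) *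
    (((divDiff g hA.eigenvalues).map Complex.ofReal) ⊙
      ((star hA.eigenvectorUnitary : Matrix ι ι ℂ) * B *
        (hA.eigenvectorUnitary : Matrix ι ι ℂ))) *
    (star hA.eigenvectorUnitary : Matrix ι ι ℂ)

noncomputable def relEnt {ι : Type*} [Fintype ι] [DecidableEq ι]
    (ρ σ : Matrix ι ι ℂ) : ℝ :=
  ((ρ * (mfun Real.log ρ - mfun Real.log σ)).trace).re

def ptrans {m n : Type*} (A : Matrix (m × n) (m × n) ℂ) : Matrix (m × n) (m × n) ℂ :=
  Matrix.of fun p q => A (p.1, q.2) (q.1, p.2)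

/-! Read ψ as a `2 × n` matrix: one of its two rows carries weight at least `1/2`, so a product
vector `w = e_i ⊗ b` with `b` the normalised row has `|⟨w, ψ⟩|² ≥ 1/2`, and then
`⟨w, F w⟩ ≥ 2 |⟨w, ψ⟩|² ≥ 1`. On product vectors the partial transpose only conjugates the
second factor, `⟨a ⊗ b, F^Γ (a ⊗ b)⟩ = ⟨a ⊗ b̄, F (a ⊗ b̄)⟩`, so `v = e_i ⊗ b̄` is the
required unit vector. -/
def tensorVec {m n α : Type*} [Mul α] (a : m → α) (b : n → α) : m × n → α :=
  fun p => a p.1 * b p.2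

def swapSnd {m n : Type*} : ((m × n) × (m × n)) ≃ ((m × n) × (m × n)) where
  toFun x := ((x.1.1, x.2.2), (x.2.1, x.1.2))
  invFun x := ((x.1.1, x.2.2), (x.2.1, x.1.2))
  left_inv _ := rfl
  right_inv _ := rfl

section

variable {m n : Type*} [Fintype m] [Fintype n]

lemma sum_normSq_tensorVec (a : m → ℂ) (b : n → ℂ) :
    ∑ p, Complex.normSq (tensorVec a b p) =
      (∑ i, Complex.normSq (a i)) * ∑ j, Complex.normSq (b j) := by
  simp only [tensorVec, Complex.normSq_mul, Fintype.sum_prod_type, Finset.sum_mul_sum]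

lemma star_tensorVec_dotProduct_ptrans_mulVec (A : Matrix (m × n) (m × n) ℂ)
    (a : m → ℂ) (b : n → ℂ) :
    star (tensorVec a b) ⬝ᵥ (ptrans A *ᵥ tensorVec a b) =
      star (tensorVec a (star b)) ⬝ᵥ (A *ᵥ tensorVec a (star b)) := by
  simp only [dotProduct, mulVec, Finset.mul_sum, ← Fintype.sum_prod_type']
  refine Fintype.sum_equiv swapSnd _ _ fun x => ?_
  simp only [swapSnd, Equiv.coe_fn_mk, tensorVec, ptrans, of_apply, Pi.star_apply, star_mul',
    star_star]
  ring

lemma le_re_star_dotProduct_mulVec_of_posSemidef_sub {A : Matrix m m ℂ} {c : ℂ} {ψ : m → ℂ}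
    (h : (A - c • vecMulVec ψ (star ψ)).PosSemidef) (w : m → ℂ) :
    c.re * Complex.normSq (star w ⬝ᵥ ψ) ≤ (star w ⬝ᵥ (A *ᵥ w)).re := by
  have hform : star w ⬝ᵥ (vecMulVec ψ (star ψ) *ᵥ w) = Complex.normSq (star w ⬝ᵥ ψ) := by
    rw [vecMulVec_mulVec, op_smul_eq_smul, dotProduct_smul, star_dotProduct,
      smul_eq_mul, Complex.normSq_eq_conj_mul_self, Complex.star_def]
  have hnonneg := Complex.le_def.mp (h.dotProduct_mulVec_nonneg w)
  rw [sub_mulVec, dotProduct_sub, smul_mulVec, dotProduct_smul, hform, smul_eq_mul] at hnonneg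
  simpa [sub_nonneg] using hnonneg.1

lemma exists_card_inv_le_sum_normSq_row {ψ : m × n → ℂ} (hψ : ∑ p, Complex.normSq (ψ p) = 1) :
    ∃ i, (Fintype.card m : ℝ)⁻¹ ≤ ∑ j, Complex.normSq (ψ (i, j)) := by
  have hm : (Finset.univ : Finset m).Nonempty := by
    by_contra h
    simp_all [Finset.not_nonempty_iff_eq_empty, Fintype.sum_prod_type]
  obtain ⟨i, -, hi⟩ := Finset.exists_le_of_sum_le hm
    (f := fun _ => (Fintype.card m : ℝ)⁻¹) (g := fun i => ∑ j, Complex.normSq (ψ (i, j))) (by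
      rw [← Fintype.sum_prod_type', hψ, Finset.sum_const, Finset.card_univ, nsmul_eq_mul,
        mul_inv_cancel₀ (by exact_mod_cast hm.card_pos.ne')])
  exact ⟨i, hi⟩

lemma exists_tensorVec_card_inv_le_normSq_dotProduct
    {ψ : m × n → ℂ} (hψ : ∑ p, Complex.normSq (ψ p) = 1) :
    ∃ (a : m → ℂ) (b : n → ℂ), ∑ i, Complex.normSq (a i) = 1 ∧
      ∑ j, Complex.normSq (b j) = 1 ∧
      (Fintype.card m : ℝ)⁻¹ ≤ Complex.normSq (star (tensorVec a b) ⬝ᵥ ψ) := by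
  classical
  obtain ⟨i, hi⟩ := exists_card_inv_le_sum_normSq_row hψ
  set r := ∑ j, Complex.normSq (ψ (i, j))
  have : Nonempty m := ⟨i⟩
  have hr : 0 < r := lt_of_lt_of_le (by positivity) hi
  refine ⟨Pi.single i 1, fun j => ψ (i, j) / √r, ?_, ?_, ?_⟩
  · rw [Fintype.sum_eq_single i fun k hk => by simp [hk]]
    simp
  · simp_rw [Complex.normSq_div, Complex.normSq_ofReal, Real.mul_self_sqrt hr.le]
    rw [← Finset.sum_div, div_self hr.ne']
  · have hoverlap : star (tensorVec (Pi.single i 1) fun j => ψ (i, j) / √r) ⬝ᵥ ψ = √r := by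
      simp only [dotProduct, tensorVec, Fintype.sum_prod_type, Pi.star_apply, star_mul']
      rw [Fintype.sum_eq_single i fun k hk => by simp [Pi.single_eq_of_ne hk]]
      simp only [Pi.single_eq_same, star_one, one_mul, star_div₀, Complex.star_def,
        Complex.conj_ofReal, div_mul_eq_mul_div, ← Complex.normSq_eq_conj_mul_self, ← Finset.sum_div]
      exact_mod_cast Real.div_sqrt
    rw [hoverlap, Complex.normSq_ofReal, Real.mul_self_sqrt hr.le]
    exact hi

end

theorem ptrans_eigenvalue_ge_one_of_dominates_rankOne_general
    {n : ℕ} (F : Matrix (Fin 2 × Fin n) (Fin 2 × Fin n) ℂ)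
    (ψ : Fin 2 × Fin n → ℂ) (hψ : ∑ p, Complex.normSq (ψ p) = 1)
    (hpos : (F - (2 : ℂ) • Matrix.vecMulVec ψ (star ψ)).PosSemidef) :
    ∃ v : Fin 2 × Fin n → ℂ, (∑ p, Complex.normSq (v p) = 1) ∧
      (1 : ℝ) ≤ (dotProduct (star v) (ptrans F *ᵥ v)).re := by
  obtain ⟨a, b, ha, hb, hoverlap⟩ := exists_tensorVec_card_inv_le_normSq_dotProduct hψ
  refine ⟨tensorVec a (star b), ?_, ?_⟩
  · simpa [sum_normSq_tensorVec, ha] using hb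
  · have hF := le_re_star_dotProduct_mulVec_of_posSemidef_sub hpos (tensorVec a b)
    rw [star_tensorVec_dotProduct_ptrans_mulVec, star_star]
    simp only [Fintype.card_fin, Nat.cast_ofNat, Complex.re_ofNat] at hoverlap hF
    linarith

theorem ptrans_eigenvalue_ge_one_of_dominates_rankOne
    {n : ℕ} (F : Matrix (Fin 2 × Fin n) (Fin 2 × Fin n) ℂ) (hF : F.IsHermitian)
    (ψ : Fin 2 × Fin n → ℂ) (hψ : ∑ p, Complex.normSq (ψ p) = 1)
    (hpos : (F - (2 : ℂ) • Matrix.vecMulVec ψ (star ψ)).PosSemidef) :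
    ∃ v : Fin 2 × Fin n → ℂ, (∑ p, Complex.normSq (v p) = 1) ∧
      (1 : ℝ) ≤ (dotProduct (star v) (ptrans F *ᵥ v)).re :=
  ptrans_eigenvalue_ge_one_of_dominates_rankOne_general F ψ hψ hpos
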